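/- arXiv:2203.10451 — 4 statements merged into one kernel-verified Lean document; each statement's English description precedes it below -/
import Mathlib

section
/- Let α and β be discrete formulas and x_i be a state of a discrete variable X. If variable X does not occur in both α and β (i.e., X occurs in at most one of them), then universal state quantification distributes over the disjunction: ∀x_i·(α ∨ β) ≡ (∀x_i·α) ∨ (∀x_i·β). -/
/-!
If `X` does not occur in `α`, conditioning `α` on any state of `X` leaves it unchanged. Hence
`∀x_i·α ≡ α`, and in every conjunct `(α ∨ β)|x_i` and `x_i ∨ (α ∨ β)|x_j` of `∀x_i·(α ∨ β)`
the disjunct `α` can be pulled out, leaving `α ∨ ∀x_i·β`.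
-/

/-- A discrete formula over variables `V`, where variable `v` has states `σ v`. -/
inductive DForm (V : Type) (σ : V → Type) : Type where
  | top : DForm V σ
  | bot : DForm V σ
  | state : (v : V) → σ v → DForm V σ
  | neg : DForm V σ → DForm V σ
  | conj : DForm V σ → DForm V σ → DForm V σ
  | disj : DForm V σ → DForm V σ → DForm V σ

namespace DForm

variable {V : Type} {σ : V → Type}

/-- Evaluation of a discrete formula in a world `w`. -/
def eval [∀ v, DecidableEq (σ v)] (w : ∀ v, σ v) : DForm V σ → Bool
  | top => true
  | bot => false
  | state v s => decide (w v = s)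
  | neg φ => !(φ.eval w)
  | conj φ ψ => φ.eval w && ψ.eval w
  | disj φ ψ => φ.eval w || ψ.eval w

/-- Two formulas are equivalent when they have the same models. -/
def equiv [∀ v, DecidableEq (σ v)] (φ ψ : DForm V σ) : Prop :=
  ∀ w : ∀ v, σ v, φ.eval w = ψ.eval w

/-- `φ ⊨ ψ`: every model of `φ` is a model of `ψ`. -/
def entails [∀ v, DecidableEq (σ v)] (φ ψ : DForm V σ) : Prop :=
  ∀ w : ∀ v, σ v, φ.eval w = true → ψ.eval w = true

/-- Conditioning `Δ|x_i`: replace occurrences of `x_i` by `⊤` and of `x_j` (`j ≠ i`) by `⊥`. -/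
def cond [DecidableEq V] [∀ v, DecidableEq (σ v)] (v : V) (s : σ v) :
    DForm V σ → DForm V σ
  | top => top
  | bot => bot
  | state u t =>
      if h : u = v then (if h ▸ t = s then top else bot) else state u t
  | neg φ => neg (φ.cond v s)
  | conj φ ψ => conj (φ.cond v s) (ψ.cond v s)
  | disj φ ψ => disj (φ.cond v s) (ψ.cond v s)

/-- Universal quantification of state `x_i`:
`∀x_i·Δ := (Δ|x_i) ∧ ⋀_{j≠i} (x_i ∨ Δ|x_j)`. -/
noncomputable def quant [DecidableEq V] [∀ v, DecidableEq (σ v)] [∀ v, Fintype (σ v)]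
    (v : V) (s : σ v) (Δ : DForm V σ) : DForm V σ :=
  ((Finset.univ.filter (fun j => j ≠ s)).toList).foldr
    (fun j acc => conj (disj (state v s) (Δ.cond v j)) acc) (Δ.cond v s)

/-- The set of variables occurring in a formula. -/
def vars : DForm V σ → Set V
  | top => ∅
  | bot => ∅
  | state u _ => {u}
  | neg φ => φ.vars
  | conj φ ψ => φ.vars ∪ ψ.vars
  | disj φ ψ => φ.vars ∪ ψ.vars

/-- Whether state `x_i` (the positive literal) occurs in the formula. -/
def stateOccurs (v : V) (s : σ v) : DForm V σ → Prop
  | top => False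
  | bot => False
  | state u t => ∃ h : u = v, h ▸ t = s
  | neg φ => φ.stateOccurs v s
  | conj φ ψ => φ.stateOccurs v s ∨ ψ.stateOccurs v s
  | disj φ ψ => φ.stateOccurs v s ∨ ψ.stateOccurs v s

/-- An NNF only negates states (literals). -/
def isNNF : DForm V σ → Prop
  | top => True
  | bot => True
  | state _ _ => True
  | neg (state _ _) => True
  | neg _ => False
  | conj φ ψ => φ.isNNF ∧ ψ.isNNF
  | disj φ ψ => φ.isNNF ∧ ψ.isNNF

/-- A positive NNF contains no negation at all. -/
def isPositive : DForm V σ → Prop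
  | top => True
  | bot => True
  | state _ _ => True
  | neg _ => False
  | conj φ ψ => φ.isPositive ∧ ψ.isPositive
  | disj φ ψ => φ.isPositive ∧ ψ.isPositive

/-- A monotone NNF is positive and has at most one state per variable. -/
def monotone (Δ : DForm V σ) : Prop :=
  Δ.isPositive ∧ ∀ (v : V) (s t : σ v), Δ.stateOccurs v s → Δ.stateOccurs v t → s = t

/-- ∨-decomposability: disjuncts of every disjunction share no variables. -/
def orDecomposable : DForm V σ → Prop
  | top => True
  | bot => True
  | state _ _ => True
  | neg φ => φ.orDecomposable
  | conj φ ψ => φ.orDecomposable ∧ ψ.orDecomposable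
  | disj φ ψ => φ.vars ∩ ψ.vars = ∅ ∧ φ.orDecomposable ∧ ψ.orDecomposable

/-- ∧-decomposability: conjuncts of every conjunction share no variables. -/
def andDecomposable : DForm V σ → Prop
  | top => True
  | bot => True
  | state _ _ => True
  | neg φ => φ.andDecomposable
  | conj φ ψ => φ.vars ∩ ψ.vars = ∅ ∧ φ.andDecomposable ∧ ψ.andDecomposable
  | disj φ ψ => φ.andDecomposable ∧ ψ.andDecomposable

end DForm

variable {V : Type} {σ : V → Type}

namespace DForm

variable [DecidableEq V] [∀ v, DecidableEq (σ v)]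

theorem cond_eq_self_of_not_mem_vars {Δ : DForm V σ} {v : V} (hv : v ∉ Δ.vars) (t : σ v) :
    Δ.cond v t = Δ := by
  induction Δ with
  | top | bot => rfl
  | state u s =>
    have hu : u ≠ v := fun h => hv (by simp [vars, h])
    simp [cond, hu]
  | neg φ ih => simp [cond, ih hv]
  | conj φ ψ ihφ ihψ | disj φ ψ ihφ ihψ =>
    simp only [vars, Set.mem_union, not_or] at hv
    simp [cond, ihφ hv.1, ihψ hv.2]

theorem eval_foldr_conj_disj_state (Δ base : DForm V σ) (v : V) (s : σ v) (L : List (σ v))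
    (w : ∀ v, σ v) :
    (L.foldr (fun j acc => conj (disj (state v s) (Δ.cond v j)) acc) base).eval w = true ↔
      (∀ j ∈ L, w v = s ∨ (Δ.cond v j).eval w = true) ∧ base.eval w = true := by
  induction L with
  | nil => simp
  | cons a L ih => simp [eval, ih, and_assoc]

variable [∀ v, Fintype (σ v)]

theorem eval_quant (Δ : DForm V σ) (v : V) (s : σ v) (w : ∀ v, σ v) :
    (quant v s Δ).eval w = true ↔
      (Δ.cond v s).eval w = true ∧ (w v = s ∨ ∀ t, (Δ.cond v t).eval w = true) := by
  rw [quant, eval_foldr_conj_disj_state]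
  simp only [Finset.mem_toList, Finset.mem_filter, Finset.mem_univ, true_and]
  constructor
  · rintro ⟨hne, hs⟩
    refine ⟨hs, or_iff_not_imp_left.2 fun hw t => ?_⟩
    by_cases ht : t = s
    · exact ht ▸ hs
    · exact (hne t ht).resolve_left hw
  · rintro ⟨hs, hall⟩
    exact ⟨fun t _ => hall.imp_right (· t), hs⟩

theorem quant_equiv_self_of_not_mem_vars {Δ : DForm V σ} {v : V} (hv : v ∉ Δ.vars) (s : σ v) :
    equiv (quant v s Δ) Δ := by
  intro w
  rw [Bool.eq_iff_iff, eval_quant]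
  simp only [cond_eq_self_of_not_mem_vars hv]
  tauto

theorem quant_disj_equiv_of_not_mem_vars_left {α : DForm V σ} {v : V} (hv : v ∉ α.vars)
    (β : DForm V σ) (s : σ v) :
    equiv (quant v s (disj α β)) (disj α (quant v s β)) := by
  intro w
  rw [Bool.eq_iff_iff, eval_quant]
  simp only [cond, cond_eq_self_of_not_mem_vars hv, eval, Bool.or_eq_true, eval_quant]
  by_cases hα : α.eval w = true <;> simp [hα]

theorem quant_disj_comm (α β : DForm V σ) (v : V) (s : σ v) :
    equiv (quant v s (disj α β)) (quant v s (disj β α)) := by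
  intro w
  rw [Bool.eq_iff_iff, eval_quant, eval_quant]
  simp only [cond, eval, Bool.or_comm]

end DForm

open DForm in
/-- If variable `X` does not occur in both `α` and `β`, universal state
quantification distributes over the disjunction. -/
theorem quant_disj_of_not_shared [DecidableEq V] [∀ v, DecidableEq (σ v)] [∀ v, Fintype (σ v)]
    (α β : DForm V σ) (X : V) (i : σ X)
    (h : ¬ (X ∈ α.vars ∧ X ∈ β.vars)) :
    equiv (quant X i (disj α β)) (disj (quant X i α) (quant X i β)) := by
  intro w
  rcases not_and_or.mp h with hα | hβ
  · rw [quant_disj_equiv_of_not_mem_vars_left hα β i w]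
    simp only [eval, quant_equiv_self_of_not_mem_vars hα i w]
  · rw [quant_disj_comm, quant_disj_equiv_of_not_mem_vars_left hβ α i w]
    simp only [eval, quant_equiv_self_of_not_mem_vars hβ i w, Bool.or_comm]
end

section
/- Let α and β be positive NNFs and x_i be a state of a discrete variable X. If x_i occurs in neither α nor β, or if for all j ≠ i the state x_j occurs in neither α nor β, then ∀x_i·(α ∨ β) ≡ (∀x_i·α) ∨ (∀x_i·β). -/
variable {V : Type} {σ : V → Type}

open DForm in
lemma quant_eval_aux [DecidableEq V] [∀ v, DecidableEq (σ v)] [∀ v, Fintype (σ v)]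
    (X : V) (i : σ X) (Δ : DForm V σ) (w : ∀ v, σ v) :
    (quant X i Δ).eval w = ((Δ.cond X i).eval w &&
      ((Finset.univ.filter (fun j => j ≠ i)).toList).all
        (fun j => decide (w X = i) || (Δ.cond X j).eval w)) := by
  unfold quant
  generalize (Finset.univ.filter (fun j => j ≠ i)).toList = L
  induction L with
  | nil => simp
  | cons j L ih =>
      simp only [List.foldr_cons, List.all_cons, eval, ih]
      cases h : decide (w X = i) <;> cases (Δ.cond X j).eval w <;> simp

open DForm in
lemma cond_mono_aux [DecidableEq V] [∀ v, DecidableEq (σ v)]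
    (X : V) (a b : σ X) (w : ∀ v, σ v) :
    ∀ (Δ : DForm V σ), Δ.isPositive → ¬ Δ.stateOccurs X a →
      (Δ.cond X a).eval w = true → (Δ.cond X b).eval w = true
  | DForm.top, _, _, _ => rfl
  | DForm.bot, _, _, h => by simp [DForm.cond, eval] at h
  | DForm.state u t, _, hocc, h => by
      simp only [DForm.cond] at h ⊢
      by_cases hu : u = X
      · subst hu
        have ht : t ≠ a := fun hta => hocc ⟨rfl, hta⟩
        simp [ht, eval] at h
      · simpa [hu] using h
  | DForm.neg φ, hpos, _, _ => absurd hpos (by simp [isPositive])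
  | DForm.conj φ ψ, hpos, hocc, h => by
      simp only [DForm.cond, eval, Bool.and_eq_true] at h ⊢
      exact ⟨cond_mono_aux X a b w φ hpos.1 (fun hh => hocc (Or.inl hh)) h.1,
             cond_mono_aux X a b w ψ hpos.2 (fun hh => hocc (Or.inr hh)) h.2⟩
  | DForm.disj φ ψ, hpos, hocc, h => by
      simp only [DForm.cond, eval, Bool.or_eq_true] at h ⊢
      rcases h with h | h
      · exact Or.inl (cond_mono_aux X a b w φ hpos.1 (fun hh => hocc (Or.inl hh)) h)
      · exact Or.inr (cond_mono_aux X a b w ψ hpos.2 (fun hh => hocc (Or.inr hh)) h)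

open DForm in
lemma cond_congr_aux [DecidableEq V] [∀ v, DecidableEq (σ v)]
    (X : V) (a b : σ X) :
    ∀ (Δ : DForm V σ), ¬ Δ.stateOccurs X a → ¬ Δ.stateOccurs X b →
      Δ.cond X a = Δ.cond X b
  | DForm.top, _, _ => rfl
  | DForm.bot, _, _ => rfl
  | DForm.state u t, ha, hb => by
      simp only [DForm.cond]
      by_cases hu : u = X
      · subst hu
        have hta : t ≠ a := fun h => ha ⟨rfl, h⟩
        have htb : t ≠ b := fun h => hb ⟨rfl, h⟩
        simp [hta, htb]
      · simp [hu]
  | DForm.neg φ, ha, hb => by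
      simp only [DForm.cond, cond_congr_aux X a b φ ha hb]
  | DForm.conj φ ψ, ha, hb => by
      simp only [DForm.cond,
        cond_congr_aux X a b φ (fun h => ha (Or.inl h)) (fun h => hb (Or.inl h)),
        cond_congr_aux X a b ψ (fun h => ha (Or.inr h)) (fun h => hb (Or.inr h))]
  | DForm.disj φ ψ, ha, hb => by
      simp only [DForm.cond,
        cond_congr_aux X a b φ (fun h => ha (Or.inl h)) (fun h => hb (Or.inl h)),
        cond_congr_aux X a b ψ (fun h => ha (Or.inr h)) (fun h => hb (Or.inr h))]

open DForm in
/-- For positive NNFs `α, β`: if `x_i` occurs in neither, or no `x_j` (`j ≠ i`)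
occurs in either, then `∀x_i` distributes over the disjunction. -/
theorem quant_disj_positive [DecidableEq V] [∀ v, DecidableEq (σ v)] [∀ v, Fintype (σ v)]
    (α β : DForm V σ) (hα : α.isPositive) (hβ : β.isPositive) (X : V) (i : σ X)
    (h : (¬ stateOccurs X i α ∧ ¬ stateOccurs X i β) ∨
         (∀ j : σ X, j ≠ i → ¬ stateOccurs X j α ∧ ¬ stateOccurs X j β)) :
    equiv (quant X i (disj α β)) (disj (quant X i α) (quant X i β)) := by
  intro w
  have hcond : ∀ j, (disj α β).cond X j = disj (α.cond X j) (β.cond X j) := fun _ => rfl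
  rw [quant_eval_aux]
  simp only [hcond, eval, quant_eval_aux]
  rw [Bool.eq_iff_iff]
  simp only [Bool.and_eq_true, Bool.or_eq_true, List.all_eq_true, decide_eq_true_eq]
  set L := (Finset.univ.filter (fun j => j ≠ i)).toList with hL
  have hmem : ∀ j : σ X, j ∈ L ↔ j ≠ i := by
    intro j
    simp [hL, Finset.mem_toList]
  constructor
  · rintro ⟨hi, hall⟩
    rcases h with ⟨hαi, hβi⟩ | hno
    · -- x_i occurs in neither α nor β
      rcases hi with hi | hi
      · exact Or.inl ⟨hi, fun j hj => Or.inr (cond_mono_aux X i j w α hα hαi hi)⟩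
      · exact Or.inr ⟨hi, fun j hj => Or.inr (cond_mono_aux X i j w β hβ hβi hi)⟩
    · -- no x_j, j ≠ i, occurs in α or β
      by_cases hx : w X = i
      · rcases hi with hi | hi
        · exact Or.inl ⟨hi, fun j hj => Or.inl hx⟩
        · exact Or.inr ⟨hi, fun j hj => Or.inl hx⟩
      · have hj0 : w X ∈ L := (hmem _).2 hx
        rcases hall _ hj0 with hcase | hcase | hcase
        · exact absurd hcase hx
        · refine Or.inl ⟨cond_mono_aux X (w X) i w α hα (hno _ hx).1 hcase,
            fun j hj => Or.inr ?_⟩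
          rw [cond_congr_aux X j (w X) α (hno _ ((hmem _).1 hj)).1 (hno _ hx).1]
          exact hcase
        · refine Or.inr ⟨cond_mono_aux X (w X) i w β hβ (hno _ hx).2 hcase,
            fun j hj => Or.inr ?_⟩
          rw [cond_congr_aux X j (w X) β (hno _ ((hmem _).1 hj)).2 (hno _ hx).2]
          exact hcase
  · rintro (⟨hi, hall⟩ | ⟨hi, hall⟩)
    · exact ⟨Or.inl hi, fun j hj => by rcases hall j hj with hh | hh
                                       exacts [Or.inl hh, Or.inr (Or.inl hh)]⟩
    · exact ⟨Or.inr hi, fun j hj => by rcases hall j hj with hh | hh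
                                       exacts [Or.inl hh, Or.inr (Or.inr hh)]⟩
end

section
/- Let α be an NNF, S be a set of states of a discrete variable X, and β = ⋁_{x_k ∈ S} x_k. If variable X occurs in α only inside disjunctions of the form ⋁_{x_k ∈ S'} x_k where S' ⊇ S is a set of states of X, then for every state x_i of X, ∀x_i·(α ∨ β) ≡ (∀x_i·α) ∨ (∀x_i·β). -/
variable {V : Type} {σ : V → Type}

/-- Disjunction of the states in a list: `⋁_{x_k ∈ l} x_k`. -/
def stateDisj (v : V) : List (σ v) → DForm V σ
  | [] => .bot
  | s :: l => .disj (.state v s) (stateDisj v l)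

/-- Variable `v` occurs in the formula only inside disjunctions of the form
`⋁_{x_k ∈ S'} x_k` where `S' ⊇ S` is a set of states of `v`. -/
inductive OnlyIn [∀ v, DecidableEq (σ v)] (v : V) (S : Finset (σ v)) : DForm V σ → Prop where
  | noVar (φ : DForm V σ) : v ∉ φ.vars → OnlyIn v S φ
  | bigDisj (l : List (σ v)) : S ⊆ l.toFinset → OnlyIn v S (stateDisj v l)
  | conj (φ ψ : DForm V σ) : OnlyIn v S φ → OnlyIn v S ψ → OnlyIn v S (.conj φ ψ)
  | disj (φ ψ : DForm V σ) : OnlyIn v S φ → OnlyIn v S ψ → OnlyIn v S (.disj φ ψ)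

namespace DForm

variable [DecidableEq V] [∀ v, DecidableEq (σ v)]

theorem eval_update_of_notMem_vars {v : V} (s : σ v) (w : ∀ v, σ v) {Δ : DForm V σ}
    (h : v ∉ Δ.vars) : Δ.eval (Function.update w v s) = Δ.eval w := by
  induction Δ with
  | top | bot => rfl
  | state u t =>
    simp only [vars, Set.mem_singleton_iff] at h
    simp [eval, Function.update_of_ne (Ne.symm h)]
  | neg φ ih => simp [eval, ih h]
  | conj φ ψ ihφ ihψ | disj φ ψ ihφ ihψ =>
    simp only [vars, Set.mem_union, not_or] at h
    simp [eval, ihφ h.1, ihψ h.2]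

theorem eval_cond (v : V) (s : σ v) (w : ∀ v, σ v) (Δ : DForm V σ) :
    (Δ.cond v s).eval w = Δ.eval (Function.update w v s) := by
  induction Δ with
  | top | bot => rfl
  | state u t =>
    by_cases h : u = v
    · subst h
      by_cases ht : t = s
      · simp [cond, eval, ht]
      · simp [cond, eval, ht, Ne.symm ht]
    · simp [cond, eval, h]
  | neg φ ih => simp [cond, eval, ih]
  | conj φ ψ ihφ ihψ | disj φ ψ ihφ ihψ => simp [cond, eval, ihφ, ihψ]

theorem eval_foldr_quant (v : V) (s : σ v) (Δ base : DForm V σ) (w : ∀ v, σ v)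
    (l : List (σ v)) :
    (l.foldr (fun j acc => conj (disj (state v s) (Δ.cond v j)) acc) base).eval w
      = ((l.all fun j => decide (w v = s) || (Δ.cond v j).eval w) && base.eval w) := by
  induction l with
  | nil => simp
  | cons a l ih => simp [eval, ih, Bool.and_assoc]

variable [∀ v, Fintype (σ v)]

theorem eval_quant_of_eq {v : V} {s : σ v} {w : ∀ v, σ v} (h : w v = s) (Δ : DForm V σ) :
    (quant v s Δ).eval w = Δ.eval w := by
  subst h
  simp [quant, eval_foldr_quant, eval_cond]

theorem eval_quant_of_ne {v : V} {s : σ v} {w : ∀ v, σ v} (h : w v ≠ s) (Δ : DForm V σ) :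
    (quant v s Δ).eval w = true ↔ ∀ j, Δ.eval (Function.update w v j) = true := by
  simp only [quant, eval_foldr_quant, eval_cond, h, decide_false, Bool.false_or,
    Bool.and_eq_true, List.all_eq_true, Finset.mem_toList, Finset.mem_filter,
    Finset.mem_univ, true_and]
  refine ⟨fun ⟨hne, hs⟩ j => ?_, fun hall => ⟨fun j _ => hall j, hall s⟩⟩
  by_cases hj : j = s
  · exact hj ▸ hs
  · exact hne j hj

end DForm

section

open DForm

variable [∀ v, DecidableEq (σ v)]

theorem eval_stateDisj (v : V) (l : List (σ v)) (w : ∀ v, σ v) :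
    (stateDisj v l).eval w = decide (w v ∈ l) := by
  induction l with
  | nil => simp [stateDisj, eval]
  | cons s l ih => simp [stateDisj, eval, ih]

theorem OnlyIn.eval_update_of_mem [DecidableEq V] {v : V} {S : Finset (σ v)} {φ : DForm V σ}
    (hφ : OnlyIn v S φ) (w : ∀ v, σ v) {j j' : σ v} (hj' : j' ∈ S)
    (h : φ.eval (Function.update w v j) = true) : φ.eval (Function.update w v j') = true := by
  induction hφ with
  | noVar φ hv => rwa [eval_update_of_notMem_vars _ _ hv] at h ⊢
  | bigDisj l hl => simpa [eval_stateDisj] using hl hj'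
  | conj φ ψ _ _ ihφ ihψ =>
    simp only [eval, Bool.and_eq_true] at h ⊢
    exact ⟨ihφ h.1, ihψ h.2⟩
  | disj φ ψ _ _ ihφ ihψ =>
    simp only [eval, Bool.or_eq_true] at h ⊢
    exact h.imp ihφ ihψ

end

open DForm in
theorem quant_disj_states_general [DecidableEq V] [∀ v, DecidableEq (σ v)] [∀ v, Fintype (σ v)]
    (X : V) (S : Finset (σ X)) (lS : List (σ X)) (hlS : lS.toFinset = S)
    (α : DForm V σ) (hα : OnlyIn X S α) (i : σ X) :
    equiv (quant X i (disj α (stateDisj X lS)))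
          (disj (quant X i α) (quant X i (stateDisj X lS))) := by
  intro w
  by_cases hw : w X = i
  · simp only [eval, eval_quant_of_eq hw]
  rw [Bool.eq_iff_iff]
  simp only [eval, Bool.or_eq_true, eval_quant_of_ne hw, eval_stateDisj, Function.update_self,
    decide_eq_true_eq]
  refine ⟨fun h => ?_, fun h j => h.imp (· j) (· j)⟩
  by_cases hall : ∀ j, j ∈ lS
  · exact Or.inr hall
  obtain ⟨j₀, hj₀⟩ := not_forall.mp hall
  have hαj₀ := (h j₀).resolve_right hj₀
  refine Or.inl fun j => (h j).elim id fun hj => ?_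
  exact hα.eval_update_of_mem w (hlS ▸ List.mem_toFinset.mpr hj) hαj₀

open DForm in
/-- If variable `X` occurs in NNF `α` only inside disjunctions `⋁_{x_k ∈ S'} x_k`
with `S' ⊇ S`, and `β = ⋁_{x_k ∈ S} x_k`, then `∀x_i` distributes over `α ∨ β`. -/
theorem quant_disj_states [DecidableEq V] [∀ v, DecidableEq (σ v)] [∀ v, Fintype (σ v)]
    (X : V) (S : Finset (σ X)) (lS : List (σ X)) (hlS : lS.toFinset = S)
    (α : DForm V σ) (hnnf : α.isNNF) (hα : OnlyIn X S α) (i : σ X) :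
    equiv (quant X i (disj α (stateDisj X lS)))
          (disj (quant X i α) (quant X i (stateDisj X lS))) :=
  quant_disj_states_general X S lS hlS α hα i
end

section
/- Let α be a positive NNF and x_i be a state of a discrete variable X. If the state x_i does not occur in α, then α|x_i ⊨ α|x_j for all j ≠ i, and ∀x_i·α ≡ α|x_i. -/
variable {V : Type} {σ : V → Type}

open DForm in
lemma cond_entails_aux [DecidableEq V] [∀ v, DecidableEq (σ v)]
    (α : DForm V σ) (hα : α.isPositive) (X : V) (i : σ X)
    (h : ¬ stateOccurs X i α) (j : σ X) (w : ∀ v, σ v)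
    (he : (α.cond X i).eval w = true) : (α.cond X j).eval w = true := by
  induction α with
  | top => simp [DForm.cond, eval]
  | bot => simp [DForm.cond, eval] at he
  | state u t =>
      by_cases hu : u = X
      · subst hu
        have ht : t ≠ i := fun hti => h ⟨rfl, hti⟩
        simp [DForm.cond, ht, eval] at he
      · simpa [DForm.cond, hu, eval] using he
  | neg φ ih => exact absurd hα (by simp [isPositive])
  | conj φ ψ ihφ ihψ =>
      obtain ⟨h1, h2⟩ : φ.isPositive ∧ ψ.isPositive := hα
      have hn : ¬ φ.stateOccurs X i ∧ ¬ ψ.stateOccurs X i := by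
        constructor <;> intro hh
        · exact h (Or.inl hh)
        · exact h (Or.inr hh)
      simp only [DForm.cond, eval, Bool.and_eq_true] at he ⊢
      exact ⟨ihφ h1 hn.1 he.1, ihψ h2 hn.2 he.2⟩
  | disj φ ψ ihφ ihψ =>
      obtain ⟨h1, h2⟩ : φ.isPositive ∧ ψ.isPositive := hα
      have hn : ¬ φ.stateOccurs X i ∧ ¬ ψ.stateOccurs X i := by
        constructor <;> intro hh
        · exact h (Or.inl hh)
        · exact h (Or.inr hh)
      simp only [DForm.cond, eval, Bool.or_eq_true] at he ⊢
      rcases he with he | he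
      · exact Or.inl (ihφ h1 hn.1 he)
      · exact Or.inr (ihψ h2 hn.2 he)

open DForm in
/-- If state `x_i` does not occur in positive NNF `α`, then `α|x_i ⊨ α|x_j` for
all `j ≠ i`, and `∀x_i·α ≡ α|x_i`. -/
theorem quant_of_state_not_occurs [DecidableEq V] [∀ v, DecidableEq (σ v)] [∀ v, Fintype (σ v)]
    (α : DForm V σ) (hα : α.isPositive) (X : V) (i : σ X)
    (h : ¬ stateOccurs X i α) :
    (∀ j : σ X, j ≠ i → entails (α.cond X i) (α.cond X j)) ∧
    equiv (quant X i α) (α.cond X i) := by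
  constructor
  · intro j _ w he
    exact cond_entails_aux α hα X i h j w he
  · intro w
    unfold quant
    have key : ∀ L : List (σ X), (∀ j ∈ L, j ≠ i) →
        (L.foldr (fun j acc => conj (disj (state X i) (α.cond X j)) acc)
          (α.cond X i)).eval w = (α.cond X i).eval w := by
      intro L hL
      induction L with
      | nil => rfl
      | cons a L ih =>
          have ihL := ih (fun j hj => hL j (List.mem_cons_of_mem a hj))
          simp only [List.foldr_cons, eval, ihL]
          cases hb : (α.cond X i).eval w with
          | false => simp
          | true =>
              have := cond_entails_aux α hα X i h a w hb
              simp [eval, this]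
    exact key _ (fun j hj => by
      have := Finset.mem_filter.mp (Finset.mem_toList.mp hj)
      exact this.2)
end
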